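/- arXiv:2312.15931 — 3 statements merged into one kernel-verified Lean document; each statement's English description precedes it below -/
import Mathlib

section
/- Let B be a standard Brownian motion and ε > 0. There exists a nonnegative random variable M_B such that M_B² admits exponential moments and, almost surely, for all 0 < h < t < ∞, the modulus of continuity satisfies ω_B(t, h) ≤ M_B · w(t, h), where ω_B(t, h) := sup_{0 ≤ u < v ≤ t, |v−u| ≤ h} |B_v − B_u|. -/
open MeasureTheory ProbabilityTheory

/-- `B` is a standard one-dimensional Brownian motion on `(Ω, P)`. -/
def IsBrownianMotion {Ω : Type*} [MeasurableSpace Ω] (P : Measure Ω) (B : ℝ → Ω → ℝ) : Prop :=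
  (∀ t : ℝ, Measurable (B t)) ∧
  (∀ ω, B 0 ω = 0) ∧
  (∀ ω, Continuous fun t => B t ω) ∧
  (∀ s t : ℝ, 0 ≤ s → s ≤ t →
    P.map (fun ω => B t ω - B s ω) = gaussianReal 0 (Real.toNNReal (t - s))) ∧
  (∀ (n : ℕ) (u : Fin (n + 1) → ℝ), Monotone u → 0 ≤ u 0 →
    iIndepFun (m := fun _ => Real.measurableSpace)
      (fun i : Fin n => fun ω => B (u i.succ) ω - B (u i.castSucc) ω) P)

/-- The function `w(t,h) = √(h (1 + ln(t/h) + ε|ln t|))` for `0 < h ≤ t`,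
and `w(t,h) = w(t,t)` for `0 < t < h`; equivalently the formula with `h` replaced
by `min t h`. -/
noncomputable def w (ε t h : ℝ) : ℝ :=
  Real.sqrt (min t h * (1 + Real.log (t / min t h) + ε * |Real.log t|))

/-!
Normalise each dyadic increment `B((k+1)2^{-j}) - B(k 2^{-j}) ~ N(0, 2^{-j})` by
`√(2^{-j} g(j,k))` for a weight `g` with `∑ exp(-(9/8) g) < ∞`. For a normalised increment `Z`,
a Gaussian computation gives `E[exp(Z²/16); Z ≥ 3] ≤ √2 exp(-(9/8) g)`; summing over all `(j,k)`
shows that the supremum `M` of the normalised increments satisfies `E exp(M²/64) < ∞`.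

The modulus bound is then deterministic. With `2^{-j₀} ≈ h`, Lévy's chaining writes `B v - B u`
through the dyadic approximations of `u` and `v` from level `j₀` on. On `[0,t]` at level
`j₀ + n` the weight is at most a multiple of `(1 + ln(t/h) + ε|ln t|)(1 + n)`, so the increments
used are bounded by a multiple of `M w(t,h) (3/4)^{n/2}`, a geometric series.
-/

open Real Filter Topology Finset

noncomputable def gridFloor (δ x : ℝ) : ℝ := ⌊x / δ⌋₊ * δ

section GridFloor

variable {δ x : ℝ}

lemma gridFloor_le (hδ : 0 < δ) (hx : 0 ≤ x) : gridFloor δ x ≤ x := by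
  rw [gridFloor, ← le_div_iff₀ hδ]
  exact Nat.floor_le (div_nonneg hx hδ.le)

lemma abs_sub_gridFloor_le (hδ : 0 < δ) (hx : 0 ≤ x) : |x - gridFloor δ x| ≤ δ := by
  have hlt : x / δ - 1 < ⌊x / δ⌋₊ := by linarith [Nat.lt_floor_add_one (x / δ)]
  have : x - δ < gridFloor δ x := by
    calc x - δ = (x / δ - 1) * δ := by field_simp
      _ < gridFloor δ x := mul_lt_mul_of_pos_right hlt hδ
  rw [abs_of_nonneg (sub_nonneg.mpr (gridFloor_le hδ hx))]
  linarith

lemma floor_div_half_bounds (x δ : ℝ) :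
    2 * ⌊x / δ⌋₊ ≤ ⌊x / (δ / 2)⌋₊ ∧ ⌊x / (δ / 2)⌋₊ ≤ 2 * ⌊x / δ⌋₊ + 1 := by
  have h : ⌊x / δ⌋₊ = ⌊x / (δ / 2)⌋₊ / 2 := by
    rw [← Nat.floor_div_natCast]
    congr 1
    push_cast
    ring
  omega

end GridFloor

section Chaining

variable {f : ℝ → ℝ}

lemma abs_sub_le_of_le_succ {δ b : ℝ} {a c : ℕ} (hb : 0 ≤ b) (hac : a ≤ c) (hca : c ≤ a + 1)
    (H : |f ((a + 1) * δ) - f (a * δ)| ≤ b) : |f (c * δ) - f (a * δ)| ≤ b := by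
  obtain rfl | rfl : c = a ∨ c = a + 1 := by omega
  · simpa using hb
  · simpa using H

lemma abs_sub_gridFloor_half_le {δ x b : ℝ} (hδ : 0 < δ) (hx : 0 ≤ x) (hb : 0 ≤ b)
    (H : ∀ k : ℕ, k * (δ / 2) ≤ x → |f ((k + 1) * (δ / 2)) - f (k * (δ / 2))| ≤ b) :
    |f (gridFloor (δ / 2) x) - f (gridFloor δ x)| ≤ b := by
  have hcoarse : gridFloor δ x = ((2 * ⌊x / δ⌋₊ : ℕ) : ℝ) * (δ / 2) := by
    rw [gridFloor]; push_cast; ring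
  obtain ⟨hlo, hhi⟩ := floor_div_half_bounds x δ
  rw [hcoarse]
  exact abs_sub_le_of_le_succ hb hlo hhi (H _ (hcoarse ▸ gridFloor_le hδ hx))

lemma abs_gridFloor_sub_gridFloor_le {δ u v b : ℝ} (hδ : 0 < δ) (hu : 0 ≤ u) (huv : u ≤ v)
    (hvu : v - u ≤ δ) (hb : 0 ≤ b)
    (H : ∀ k : ℕ, k * δ ≤ u → |f ((k + 1) * δ) - f (k * δ)| ≤ b) :
    |f (gridFloor δ v) - f (gridFloor δ u)| ≤ b := by
  have hle : ⌊v / δ⌋₊ ≤ ⌊u / δ⌋₊ + 1 := by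
    rw [← Nat.floor_add_one (div_nonneg hu hδ.le)]
    apply Nat.floor_le_floor
    rw [div_add_one hδ.ne', div_le_div_iff_of_pos_right hδ]
    linarith
  exact abs_sub_le_of_le_succ hb (Nat.floor_le_floor (by gcongr)) hle
    (H _ (gridFloor_le hδ hu))

variable {s t q R : ℝ}

lemma abs_sub_gridFloor_le_of_dyadic_increments (hf : Continuous f) (hs : 0 < s) (hq0 : 0 ≤ q)
    (hq1 : q < 1) (H : ∀ n k : ℕ, k * (s / 2 ^ n) ≤ t →
      |f ((k + 1) * (s / 2 ^ n)) - f (k * (s / 2 ^ n))| ≤ R * q ^ n)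
    {x : ℝ} (hx : 0 ≤ x) (hxt : x ≤ t) :
    |f x - f (gridFloor s x)| ≤ R * (q / (1 - q)) := by
  have hR : 0 ≤ R := by simpa using (abs_nonneg _).trans (H 0 0 (by simpa using hx.trans hxt))
  have hstep (m : ℕ) :
      |f (gridFloor (s / 2 ^ (m + 1)) x) - f (gridFloor (s / 2 ^ m) x)| ≤ R * q ^ (m + 1) := by
    rw [pow_succ, ← div_div]
    refine abs_sub_gridFloor_half_le (by positivity) hx (by positivity) fun k hk => ?_
    rw [div_div, ← pow_succ] at hk ⊢
    exact H _ _ (hk.trans hxt)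
  have hchain (n : ℕ) : |f (gridFloor (s / 2 ^ n) x) - f (gridFloor s x)| ≤ R * (q / (1 - q)) :=
    calc |f (gridFloor (s / 2 ^ n) x) - f (gridFloor s x)|
        = |∑ m ∈ range n, (f (gridFloor (s / 2 ^ (m + 1)) x) - f (gridFloor (s / 2 ^ m) x))| := by
          rw [sum_range_sub (fun m => f (gridFloor (s / 2 ^ m) x)), pow_zero, div_one]
      _ ≤ ∑ m ∈ range n, R * q ^ (m + 1) :=
          (abs_sum_le_sum_abs _ _).trans (sum_le_sum fun m _ => hstep m)
      _ = R * q * ∑ m ∈ Ico 0 n, q ^ m := by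
          rw [← range_eq_Ico, mul_sum]; simp only [pow_succ]; ring_nf
      _ ≤ R * q * (q ^ 0 / (1 - q)) := by gcongr; exact geom_sum_Ico_le_of_lt_one hq0 hq1
      _ = R * (q / (1 - q)) := by ring
  have hgrid : Tendsto (fun n : ℕ => gridFloor (s / 2 ^ n) x) atTop (𝓝 x) := by
    have hmesh : Tendsto (fun n : ℕ => s / 2 ^ n) atTop (𝓝 0) := by
      simpa [div_eq_mul_inv, inv_pow] using
        (tendsto_pow_atTop_nhds_zero_of_lt_one (by norm_num : (0 : ℝ) ≤ 2⁻¹)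
          (by norm_num)).const_mul s
    refine tendsto_iff_norm_sub_tendsto_zero.mpr (squeeze_zero (fun _ => norm_nonneg _)
      (fun n => ?_) hmesh)
    rw [Real.norm_eq_abs, abs_sub_comm]
    exact abs_sub_gridFloor_le (by positivity) hx
  exact le_of_tendsto (((hf.tendsto x).comp hgrid).sub_const _).abs (Eventually.of_forall hchain)

theorem abs_sub_le_of_dyadic_increments (hf : Continuous f) (hs : 0 < s) (hq0 : 0 ≤ q)
    (hq1 : q < 1) (H : ∀ n k : ℕ, k * (s / 2 ^ n) ≤ t →
      |f ((k + 1) * (s / 2 ^ n)) - f (k * (s / 2 ^ n))| ≤ R * q ^ n)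
    {u v : ℝ} (hu : 0 ≤ u) (huv : u ≤ v) (hvt : v ≤ t) (hvu : v - u ≤ s) :
    |f v - f u| ≤ R * ((1 + q) / (1 - q)) := by
  have hR : 0 ≤ R := by
    simpa using (abs_nonneg _).trans (H 0 0 (by simpa using hu.trans (huv.trans hvt)))
  have hv := abs_sub_gridFloor_le_of_dyadic_increments hf hs hq0 hq1 H (hu.trans huv) hvt
  have hu' := abs_sub_gridFloor_le_of_dyadic_increments hf hs hq0 hq1 H hu (huv.trans hvt)
  have hmid : |f (gridFloor s v) - f (gridFloor s u)| ≤ R :=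
    abs_gridFloor_sub_gridFloor_le hs hu huv hvu hR fun k hk => by
      simpa using H 0 k (by simpa using hk.trans (huv.trans hvt))
  rw [abs_sub_comm] at hu'
  calc |f v - f u|
      ≤ |f v - f (gridFloor s v)| + |f (gridFloor s v) - f (gridFloor s u)|
        + |f (gridFloor s u) - f u| := by
        linarith [abs_sub_le (f v) (f (gridFloor s v)) (f u),
          abs_sub_le (f (gridFloor s v)) (f (gridFloor s u)) (f u)]
    _ ≤ R * (q / (1 - q)) + R + R * (q / (1 - q)) := by gcongr
    _ = R * ((1 + q) / (1 - q)) := by field_simp [(sub_pos.mpr hq1).ne']; ring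

end Chaining

/-- Weight of the dyadic interval `[k 2^{-j}, (k + 1) 2^{-j}]`. The terms `ε |j|` and
`log (1 + k)` make `∑ exp (-(9/8) · weight)` converge; `ε |j|` is where `ε |ln t|` in `w` comes
from. -/
noncomputable def dyadicWeight (ε : ℝ) (j : ℤ) (k : ℕ) : ℝ := 1 + ε * |(j : ℝ)| + log (1 + k)

lemma one_le_dyadicWeight {ε : ℝ} (hε : 0 ≤ ε) (j : ℤ) (k : ℕ) : 1 ≤ dyadicWeight ε j k := by
  have := log_nonneg (by simp : (1 : ℝ) ≤ 1 + k)
  unfold dyadicWeight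
  nlinarith [abs_nonneg (j : ℝ)]

lemma summable_exp_neg_mul_dyadicWeight {ε : ℝ} (hε : 0 < ε) :
    Summable fun p : ℤ × ℕ => exp (-(9 / 8) * dyadicWeight ε p.1 p.2) := by
  have hj : Summable fun j : ℤ => exp (-(9 / 8) * ε * |(j : ℝ)|) := by
    have h := Real.summable_exp_nat_mul_iff.mpr (by linarith : -(9 / 8) * ε < 0)
    refine summable_int_iff_summable_nat_and_neg.mpr ⟨?_, ?_⟩ <;>
      simpa [mul_comm] using h
  have hk : Summable fun k : ℕ => exp (-(9 / 8) * log (1 + k)) := by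
    refine ((Real.summable_one_div_nat_add_rpow 1 (9 / 8)).mpr (by norm_num)).congr fun k => ?_
    rw [abs_of_nonneg (by positivity), add_comm, rpow_def_of_pos (by positivity), one_div,
      ← exp_neg]
    ring_nf
  refine ((hj.mul_of_nonneg hk (fun _ => (exp_pos _).le) fun _ => (exp_pos _).le).mul_left
    (exp (-(9 / 8)))).congr fun p => ?_
  rw [dyadicWeight, ← exp_add, ← exp_add]
  ring_nf

lemma abs_le_of_le_two_zpow_neg {h : ℝ} {j : ℤ} (hh : 0 < h) (h₁ : h ≤ 2 ^ (-j))
    (h₂ : (2 : ℝ) ^ (-j) < 2 * h) : |(j : ℝ)| ≤ 1 + 2 * |log h| := by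
  have hlog : log ((2 : ℝ) ^ (-j)) = -j * log 2 := by rw [Real.log_zpow]; push_cast; ring
  have hlo : log h ≤ -j * log 2 := hlog ▸ log_le_log hh h₁
  have hhi : -j * log 2 < log 2 + log h := by
    rw [← hlog, ← log_mul two_ne_zero hh.ne']
    exact log_lt_log (by positivity) h₂
  have hlog2 : 1 / 2 < log 2 := by linarith [log_two_gt_d9]
  rw [abs_le]
  constructor <;> nlinarith [le_abs_self (log h), neg_abs_le (log h)]

lemma log_one_add_le_of_natCast_mul_le {h t s : ℝ} {k n : ℕ} (hh : 0 < h) (hht : h ≤ t) (hs : h ≤ s)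
    (hk : k * (s / 2 ^ n) ≤ t) : log (1 + k) ≤ 1 + log (t / h) + n := by
  have hth : 1 ≤ t / h := (one_le_div hh).mpr hht
  have hk' : (k : ℝ) ≤ t / h * 2 ^ n := by
    have : (k : ℝ) * h / 2 ^ n ≤ t := by
      calc (k : ℝ) * h / 2 ^ n ≤ k * s / 2 ^ n := by gcongr
        _ ≤ t := by rwa [mul_div_assoc]
    rw [div_le_iff₀ (by positivity)] at this
    rw [div_mul_eq_mul_div, le_div_iff₀ hh]
    linarith
  have h2n : (1 : ℝ) ≤ 2 ^ n := one_le_pow₀ one_le_two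
  calc log (1 + k) ≤ log (2 * (t / h) * 2 ^ n) := by
        apply log_le_log (by positivity); nlinarith
    _ = log 2 + log (t / h) + n * log 2 := by
        rw [log_mul (by positivity) (by positivity), log_mul two_ne_zero (by positivity),
          log_pow]
    _ ≤ 1 + log (t / h) + n := by
        have : (n : ℝ) * log 2 ≤ n := by
          nlinarith [log_two_lt_d9, (Nat.cast_nonneg n : (0 : ℝ) ≤ n)]
        linarith [log_two_lt_d9]

lemma dyadicWeight_le {ε h t : ℝ} {j₀ : ℤ} (hε : 0 < ε) (hh : 0 < h) (hht : h ≤ t)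
    (h₁ : h ≤ 2 ^ (-j₀)) (h₂ : (2 : ℝ) ^ (-j₀) < 2 * h) {n k : ℕ}
    (hk : k * (2 ^ (-j₀) / 2 ^ n) ≤ t) :
    dyadicWeight ε (j₀ + n) k ≤ 2 * (1 + ε) * (1 + log (t / h) + ε * |log t|) * (1 + n) := by
  have hj₀ := abs_le_of_le_two_zpow_neg hh h₁ h₂
  have hk' := log_one_add_le_of_natCast_mul_le hh hht h₁ hk
  have hL : 0 ≤ log (t / h) := log_nonneg ((one_le_div hh).mpr hht)
  have hlogh : |log h| ≤ |log t| + log (t / h) := by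
    have : log h = log t - log (t / h) := by
      rw [log_div (hh.trans_le hht).ne' hh.ne']; ring
    calc |log h| ≤ |log t| + |log (t / h)| := this ▸ abs_sub (log t) (log (t / h))
      _ = |log t| + log (t / h) := by rw [abs_of_nonneg hL]
  have hj : |((j₀ + n : ℤ) : ℝ)| ≤ |(j₀ : ℝ)| + n := by
    push_cast
    exact (abs_add_le _ _).trans_eq (by rw [Nat.abs_cast])
  have hεj : ε * |((j₀ + n : ℤ) : ℝ)| ≤ ε * (1 + 2 * (|log t| + log (t / h)) + n) := by
    gcongr
    linarith
  have hX := abs_nonneg (log t)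
  have hn := (Nat.cast_nonneg n : (0 : ℝ) ≤ n)
  unfold dyadicWeight
  nlinarith [mul_nonneg hL hn, mul_nonneg (mul_nonneg hε.le hX) hn, mul_nonneg hε.le hL,
    mul_nonneg hε.le hn, mul_nonneg (mul_nonneg hε.le hL) hn, mul_nonneg hε.le hX,
    mul_nonneg (mul_nonneg hε.le hε.le) hX, mul_nonneg (mul_nonneg (mul_nonneg hε.le hε.le) hX) hn]

lemma one_add_div_two_pow_le (n : ℕ) : (1 + n) / 2 ^ n ≤ 2 * (3 / 4 : ℝ) ^ n := by
  have h := one_add_mul_le_pow (by norm_num : (-2 : ℝ) ≤ 1 / 2) n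
  rw [div_le_iff₀ (by positivity), mul_assoc, ← mul_pow]
  norm_num at h ⊢
  linarith

lemma two_zpow_neg_add (j : ℤ) (n : ℕ) : (2 : ℝ) ^ (-(j + n)) = 2 ^ (-j) / 2 ^ n := by
  rw [neg_add, zpow_add₀ two_ne_zero, zpow_neg (2 : ℝ) (n : ℤ), zpow_natCast, div_eq_mul_inv]

theorem abs_sub_le_mul_w {ε : ℝ} (hε : 0 < ε) {f : ℝ → ℝ} (hf : Continuous f) {A : ℝ}
    (hA : 0 ≤ A) (H : ∀ (j : ℤ) (k : ℕ),
      |f ((k + 1) * 2 ^ (-j)) - f (k * 2 ^ (-j))| ≤ A * √(2 ^ (-j) * dyadicWeight ε j k))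
    {t h u v : ℝ} (hh : 0 < h) (hht : h ≤ t) (hu : 0 ≤ u) (huv : u ≤ v) (hvt : v ≤ t)
    (hvu : v - u ≤ h) :
    |f v - f u| ≤ 30 * √(2 + 2 * ε) * A * w ε t h := by
  obtain ⟨m, hm₁, hm₂⟩ := exists_mem_Ioc_zpow hh one_lt_two
  set j₀ := -(m + 1)
  set s : ℝ := 2 ^ (-j₀)
  have hs : s = 2 ^ (m + 1) := by simp only [s, j₀, neg_neg]
  have h₁ : h ≤ s := hs ▸ hm₂
  have h₂ : s < 2 * h := by rw [hs, zpow_add_one₀ two_ne_zero]; linarith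
  set D := 1 + log (t / h) + ε * |log t|
  have hD : 0 ≤ D := by
    have := log_nonneg ((one_le_div hh).mpr hht); positivity
  set q : ℝ := √(3 / 4)
  set R := A * √(2 * s * (2 * (1 + ε) * D))
  have hincr : ∀ n k : ℕ, k * (s / 2 ^ n) ≤ t →
      |f ((k + 1) * (s / 2 ^ n)) - f (k * (s / 2 ^ n))| ≤ R * q ^ n := by
    intro n k hk
    have hg := dyadicWeight_le hε hh hht h₁ h₂ hk
    have hq : (3 / 4 : ℝ) ^ n = (q ^ n) ^ 2 := by
      rw [← pow_mul, mul_comm, pow_mul, Real.sq_sqrt (by norm_num)]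
    calc |f ((k + 1) * (s / 2 ^ n)) - f (k * (s / 2 ^ n))|
        ≤ A * √(s / 2 ^ n * dyadicWeight ε (j₀ + n) k) := two_zpow_neg_add j₀ n ▸ H (j₀ + n) k
      _ ≤ A * √(2 * s * (2 * (1 + ε) * D) * (q ^ n) ^ 2) := by
          refine mul_le_mul_of_nonneg_left (Real.sqrt_le_sqrt ?_) hA
          calc s / 2 ^ n * dyadicWeight ε (j₀ + n) k
              ≤ s / 2 ^ n * (2 * (1 + ε) * D * (1 + n)) := by gcongr
            _ = s * (2 * (1 + ε) * D) * ((1 + n) / 2 ^ n) := by ring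
            _ ≤ s * (2 * (1 + ε) * D) * (2 * (3 / 4) ^ n) := by
                gcongr; exact one_add_div_two_pow_le n
            _ = _ := by rw [hq]; ring
      _ = R * q ^ n := by
          rw [Real.sqrt_mul (by positivity), Real.sqrt_sq (by positivity), ← mul_assoc]
  have hq1 : q ≤ 7 / 8 := Real.sqrt_le_iff.mpr ⟨by norm_num, by norm_num⟩
  have hw : w ε t h = √(h * D) := by rw [w, min_eq_right hht]
  calc |f v - f u| ≤ R * ((1 + q) / (1 - q)) :=
        abs_sub_le_of_dyadic_increments hf (by positivity) (Real.sqrt_nonneg _) (by linarith)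
          hincr hu huv hvt (hvu.trans h₁)
    _ ≤ R * 15 := by
        gcongr
        rw [div_le_iff₀ (by linarith)]; linarith
    _ ≤ A * √(4 * (2 + 2 * ε) * (h * D)) * 15 := by
        refine mul_le_mul_of_nonneg_right (mul_le_mul_of_nonneg_left (Real.sqrt_le_sqrt ?_) hA)
          (by norm_num)
        nlinarith [mul_le_mul_of_nonneg_right h₂.le (by positivity : 0 ≤ 2 * (1 + ε) * D)]
    _ = 30 * √(2 + 2 * ε) * A * w ε t h := by
        rw [hw, Real.sqrt_mul (by positivity), Real.sqrt_mul (by norm_num),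
          show (4 : ℝ) = 2 ^ 2 by norm_num, Real.sqrt_sq (by norm_num)]
        ring

/-- Without the cut-off at `3`, `E tailExp (|X| / √(δ G))` for `X ~ N(0, δ)` would not decay
in `G`. -/
noncomputable def tailExp : ℝ → ℝ := Set.indicator (Set.Ici 3) fun z => exp (z ^ 2 / 16)

lemma measurable_tailExp : Measurable tailExp :=
  (by fun_prop : Measurable fun z : ℝ => exp (z ^ 2 / 16)).indicator measurableSet_Ici

lemma measurable_ofReal_tailExp_abs_div (c : ℝ) :
    Measurable fun x : ℝ => ENNReal.ofReal (tailExp (|x| / c)) :=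
  (measurable_tailExp.comp (by fun_prop)).ennreal_ofReal

lemma exp_neg_mul_tailExp_le {δ G : ℝ} (hδ : 0 < δ) (hG : 1 / 2 ≤ G) (x : ℝ) :
    exp (-x ^ 2 / (2 * δ)) * tailExp (|x| / √(δ * G))
      ≤ exp (-(9 / 8) * G) * exp (-(1 / (4 * δ)) * x ^ 2) := by
  by_cases hz : 3 ≤ |x| / √(δ * G)
  · rw [tailExp, Set.indicator_of_mem (Set.mem_Ici.mpr hz), ← exp_add, ← exp_add, exp_le_exp]
    set z := |x| / √(δ * G)
    have hx : x ^ 2 = z ^ 2 * (δ * G) := by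
      rw [div_pow, sq_abs, Real.sq_sqrt (by positivity), div_mul_cancel₀ _ (by positivity)]
    rw [hx]
    field_simp
    nlinarith [mul_le_mul_of_nonneg_left (show 9 ≤ z ^ 2 by nlinarith)
      (by linarith : 0 ≤ 4 * G - 1)]
  · rw [tailExp, Set.indicator_of_notMem (by simpa using hz), mul_zero]
    positivity

lemma lintegral_tailExp_gaussianReal_le {δ G : ℝ} (hδ : 0 < δ) (hG : 1 / 2 ≤ G) :
    ∫⁻ x, ENNReal.ofReal (tailExp (|x| / √(δ * G))) ∂gaussianReal 0 δ.toNNReal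
      ≤ ENNReal.ofReal (√2 * exp (-(9 / 8) * G)) := by
  have hv : δ.toNNReal ≠ 0 := by simpa using hδ
  rw [gaussianReal_of_var_ne_zero 0 hv, lintegral_withDensity_eq_lintegral_mul _
    (measurable_gaussianPDF 0 _) (measurable_ofReal_tailExp_abs_div _)]
  calc ∫⁻ x, (gaussianPDF 0 δ.toNNReal * fun x => ENNReal.ofReal (tailExp (|x| / √(δ * G)))) x
      ≤ ∫⁻ x, ENNReal.ofReal
          (exp (-(9 / 8) * G) * ((√(2 * π * δ))⁻¹ * exp (-(1 / (4 * δ)) * x ^ 2))) := by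
        refine lintegral_mono fun x => ?_
        simp only [Pi.mul_apply, gaussianPDF, gaussianPDFReal, Real.coe_toNNReal δ hδ.le, sub_zero]
        rw [← ENNReal.ofReal_mul (by positivity)]
        refine ENNReal.ofReal_le_ofReal ?_
        have := exp_neg_mul_tailExp_le hδ hG x
        calc (√(2 * π * δ))⁻¹ * exp (-x ^ 2 / (2 * δ)) * tailExp (|x| / √(δ * G))
            = (√(2 * π * δ))⁻¹ * (exp (-x ^ 2 / (2 * δ)) * tailExp (|x| / √(δ * G))) := by ring
          _ ≤ (√(2 * π * δ))⁻¹ * (exp (-(9 / 8) * G) * exp (-(1 / (4 * δ)) * x ^ 2)) := by gcongr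
          _ = _ := by ring
    _ = ENNReal.ofReal (√2 * exp (-(9 / 8) * G)) := by
        rw [← ofReal_integral_eq_lintegral_ofReal
          (((integrable_exp_neg_mul_sq (by positivity)).const_mul _).const_mul _)
          (ae_of_all _ fun x => by positivity), integral_const_mul, integral_const_mul,
          integral_gaussian]
        congr 1
        have : π / (1 / (4 * δ)) = 2 * (2 * π * δ) := by field_simp; ring
        rw [this, Real.sqrt_mul zero_le_two]
        field_simp

section SupremumOfFamily

variable {ι : Type*} (z : ι → ℝ)

lemma ofReal_exp_sq_le_tsum_tailExp {r : ℝ} (hr : 4 < r)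
    (hrz : ENNReal.ofReal (r - 1) < ⨆ i, ENNReal.ofReal (z i)) :
    ENNReal.ofReal (exp (r ^ 2 / 64)) ≤ ∑' i, ENNReal.ofReal (tailExp (z i)) := by
  obtain ⟨i, hi⟩ := lt_iSup_iff.mp hrz
  have hi' : r - 1 < z i := (ENNReal.ofReal_lt_ofReal_iff_of_nonneg (by linarith)).mp hi
  refine le_trans (ENNReal.ofReal_le_ofReal ?_) (ENNReal.le_tsum i)
  rw [tailExp, Set.indicator_of_mem (Set.mem_Ici.mpr (by linarith)), exp_le_exp]
  nlinarith

lemma iSup_ofReal_ne_top_of_tsum_tailExp_ne_top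
    (hz : ∑' i, ENNReal.ofReal (tailExp (z i)) ≠ ⊤) : ⨆ i, ENNReal.ofReal (z i) ≠ ⊤ := by
  set S := ∑' i, ENNReal.ofReal (tailExp (z i))
  intro htop
  set r := S.toReal + 64
  have hS : ENNReal.ofReal (exp (r ^ 2 / 64)) ≤ S :=
    ofReal_exp_sq_le_tsum_tailExp z (by linarith [ENNReal.toReal_nonneg (a := S)])
      (htop ▸ ENNReal.ofReal_lt_top)
  rw [ENNReal.ofReal_le_iff_le_toReal hz] at hS
  have : r ≤ r ^ 2 / 64 := by
    rw [le_div_iff₀ (by norm_num)]; nlinarith [ENNReal.toReal_nonneg (a := S)]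
  linarith [add_one_le_exp (r ^ 2 / 64)]

lemma ofReal_exp_sq_toReal_iSup_le :
    ENNReal.ofReal (exp ((⨆ i, ENNReal.ofReal (z i)).toReal ^ 2 / 64))
      ≤ ENNReal.ofReal (exp (1 / 4)) + ∑' i, ENNReal.ofReal (tailExp (z i)) := by
  set T := ⨆ i, ENNReal.ofReal (z i)
  rcases le_or_gt T.toReal 4 with hT | hT
  · refine le_add_right (ENNReal.ofReal_le_ofReal (exp_le_exp.mpr ?_))
    nlinarith [ENNReal.toReal_nonneg (a := T)]
  · have hTtop : T ≠ ⊤ := by rintro h; simp [h] at hT; linarith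
    refine le_add_left (ofReal_exp_sq_le_tsum_tailExp z hT ?_)
    calc ENNReal.ofReal (T.toReal - 1) < ENNReal.ofReal T.toReal :=
          (ENNReal.ofReal_lt_ofReal_iff (by linarith)).mpr (by linarith)
      _ = T := ENNReal.ofReal_toReal hTtop

end SupremumOfFamily

theorem exists_abs_le_mul_sqrt_of_gaussian {ι Ω : Type*} [Countable ι] [MeasurableSpace Ω]
    {P : Measure Ω} [IsFiniteMeasure P] {X : ι → Ω → ℝ} (hX : ∀ i, Measurable (X i))
    {δ G : ι → ℝ} (hδ : ∀ i, 0 < δ i) (hlaw : ∀ i, P.map (X i) = gaussianReal 0 (δ i).toNNReal)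
    (hG : ∀ i, 1 / 2 ≤ G i) (hsum : Summable fun i => exp (-(9 / 8) * G i)) :
    ∃ M : Ω → ℝ, (∀ ω, 0 ≤ M ω) ∧ ∫⁻ ω, ENNReal.ofReal (exp (M ω ^ 2 / 64)) ∂P < ⊤ ∧
      ∀ᵐ ω ∂P, ∀ i, |X i ω| ≤ M ω * √(δ i * G i) := by
  set Z : ι → Ω → ℝ := fun i ω => |X i ω| / √(δ i * G i)
  set S : Ω → ENNReal := fun ω => ∑' i, ENNReal.ofReal (tailExp (Z i ω))
  have hmeas (i : ι) := measurable_ofReal_tailExp_abs_div √(δ i * G i)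
  have hSmeas : Measurable S := Measurable.tsum fun i => (hmeas i).comp (hX i)
  have hS : ∫⁻ ω, S ω ∂P < ⊤ := by
    calc ∫⁻ ω, S ω ∂P = ∑' i, ∫⁻ ω, ENNReal.ofReal (tailExp (Z i ω)) ∂P :=
          lintegral_tsum fun i => ((hmeas i).comp (hX i)).aemeasurable
      _ ≤ ∑' i, ENNReal.ofReal (√2 * exp (-(9 / 8) * G i)) := by
          refine ENNReal.tsum_le_tsum fun i => ?_
          have := lintegral_tailExp_gaussianReal_le (hδ i) (hG i)
          rwa [← hlaw i, lintegral_map (hmeas i) (hX i)] at this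
      _ < ⊤ := by
          rw [← ENNReal.ofReal_tsum_of_nonneg (fun i => by positivity) (hsum.mul_left _)]
          exact ENNReal.ofReal_lt_top
  refine ⟨fun ω => (⨆ i, ENNReal.ofReal (Z i ω)).toReal, fun ω => ENNReal.toReal_nonneg, ?_, ?_⟩
  · calc ∫⁻ ω, ENNReal.ofReal (exp ((⨆ i, ENNReal.ofReal (Z i ω)).toReal ^ 2 / 64)) ∂P
        ≤ ∫⁻ ω, (ENNReal.ofReal (exp (1 / 4)) + S ω) ∂P :=
          lintegral_mono fun ω => ofReal_exp_sq_toReal_iSup_le _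
      _ < ⊤ := by
          rw [lintegral_add_left measurable_const, lintegral_const]
          exact ENNReal.add_lt_top.mpr ⟨ENNReal.mul_lt_top ENNReal.ofReal_lt_top
            (measure_lt_top P _), hS⟩
  · filter_upwards [ae_lt_top hSmeas hS.ne] with ω hω i
    have hT := iSup_ofReal_ne_top_of_tsum_tailExp_ne_top (fun i => Z i ω) hω.ne
    have hZ : Z i ω ≤ (⨆ i, ENNReal.ofReal (Z i ω)).toReal :=
      (ENNReal.ofReal_le_iff_le_toReal hT).mp (le_iSup (fun i => ENNReal.ofReal (Z i ω)) i)
    rwa [div_le_iff₀ (Real.sqrt_pos.mpr (mul_pos (hδ i) (by linarith [hG i])))] at hZ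

/-- **Corollary (uniform control of the modulus of continuity).**
There is a nonnegative random variable `M_B` whose square admits exponential moments
such that, almost surely, for all `0 < h < t < ∞`, the modulus of continuity satisfies
`ω_B(t,h) ≤ M_B · w(t,h)`, i.e. `|B_v − B_u| ≤ M_B · w(t,h)` for all
`0 ≤ u < v ≤ t` with `v − u ≤ h`. -/
theorem brownian_modulus_of_continuity_bound
    {Ω : Type*} [MeasurableSpace Ω] (P : Measure Ω) [IsProbabilityMeasure P]
    (B : ℝ → Ω → ℝ) (hB : IsBrownianMotion P B) (ε : ℝ) (hε : 0 < ε) :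
    ∃ M : Ω → ℝ, (∀ ω, 0 ≤ M ω) ∧
      (∃ lam : ℝ, 0 < lam ∧
        ∫⁻ ω, ENNReal.ofReal (Real.exp (lam * (M ω) ^ 2)) ∂P < ⊤) ∧
      (∀ᵐ ω ∂P, ∀ t h : ℝ, 0 < h → h < t →
        ∀ u v : ℝ, 0 ≤ u → u < v → v ≤ t → v - u ≤ h →
          |B v ω - B u ω| ≤ M ω * w ε t h) := by
  obtain ⟨hmeas, -, hcont, hlaw, -⟩ := hB
  have hlaw_dyadic (p : ℤ × ℕ) :
      P.map (fun ω => B ((p.2 + 1) * 2 ^ (-p.1)) ω - B (p.2 * 2 ^ (-p.1)) ω)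
        = gaussianReal 0 ((2 : ℝ) ^ (-p.1)).toNNReal := by
    have h := hlaw (p.2 * 2 ^ (-p.1)) ((p.2 + 1) * 2 ^ (-p.1)) (by positivity)
      (by gcongr; linarith)
    rwa [show ((p.2 : ℝ) + 1) * 2 ^ (-p.1) - p.2 * 2 ^ (-p.1) = 2 ^ (-p.1) by ring] at h
  obtain ⟨M, hM, hmom, hbound⟩ := exists_abs_le_mul_sqrt_of_gaussian
    (fun p => (hmeas _).sub (hmeas _)) (fun p => zpow_pos two_pos (-p.1)) hlaw_dyadic
    (fun p => by linarith [one_le_dyadicWeight hε.le p.1 p.2])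
    (summable_exp_neg_mul_dyadicWeight hε)
  set K := 30 * √(2 + 2 * ε)
  have hK : 0 < K := by positivity
  refine ⟨fun ω => K * M ω, fun ω => mul_nonneg hK.le (hM ω),
    ⟨1 / (64 * K ^ 2), by positivity, ?_⟩, ?_⟩
  · convert hmom using 5
    field_simp
  · filter_upwards [hbound] with ω hω t h hh hht u v hu huv hvt hvu
    exact abs_sub_le_mul_w hε (hcont ω) (hM ω) (fun j k => hω (j, k)) hh hht.le hu huv.le hvt hvu
end

section
/- Let B be a standard Brownian motion, 0 < ε < 1, and a > 0. Define the scaled Brownian motion B̃ by B̃_t := a^{−1/2} B_{a t} for all t ≥ 0. Then, almost surely, M_{B̃} := sup_{0 ≤ s < t < ∞} |B̃_t − B̃_s| / w(t, t − s) ≤ (1 + √(ε|ln a|)) · M_B, where M_B := sup_{0 ≤ s < t < ∞} |B_t − B_s| / w(t, t − s). -/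
/-!
The bound holds for every path, not only almost surely. The modulus `w` scales well:
`w(a t, a h) ≤ √a (1 + √(ε |ln a|)) w(t, h)`, because `ln (a t / a h) = ln (t / h)` and
`|ln (a t)| ≤ |ln a| + |ln t|`. Hence every increment ratio of `B̃` at `(s, t)` is at most
`1 + √(ε |ln a|)` times the ratio of `B` at `(a s, a t)`. When `M_B` is an infinite supremum,
Lean's `sSup` is `0`; applying the same bound with `a⁻¹` in place of `a` shows that `M_{B̃}`
is then infinite as well.
-/

open MeasureTheory ProbabilityTheory

/-- `M_X(ω) := sup_{0 ≤ s < t < ∞} |X_t(ω) − X_s(ω)| / w(t, t − s)`. -/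
noncomputable def MSup {Ω : Type*} (ε : ℝ) (X : ℝ → Ω → ℝ) (ω : Ω) : ℝ :=
  sSup {r : ℝ | ∃ s t : ℝ, 0 ≤ s ∧ s < t ∧ r = |X t ω - X s ω| / w ε t (t - s)}

open Real

lemma Real.sqrt_add_le_sqrt_add_sqrt {x y : ℝ} (hx : 0 ≤ x) (hy : 0 ≤ y) :
    √(x + y) ≤ √x + √y := by
  rw [Real.sqrt_le_iff]
  refine ⟨by positivity, ?_⟩
  nlinarith [sq_sqrt hx, sq_sqrt hy, mul_nonneg (sqrt_nonneg x) (sqrt_nonneg y)]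

lemma Real.sSup_le_mul_sSup {S T : Set ℝ} {C : ℝ} (hC : 0 ≤ C) (hT : ∀ y ∈ T, 0 ≤ y)
    (hST : ∀ x ∈ S, ∃ y ∈ T, x ≤ C * y) (hTS : ∀ y ∈ T, ∃ x ∈ S, y ≤ C * x) :
    sSup S ≤ C * sSup T := by
  by_cases hT_bdd : BddAbove T
  · refine Real.sSup_le (fun x hx => ?_) (mul_nonneg hC (Real.sSup_nonneg hT))
    obtain ⟨y, hy, hxy⟩ := hST x hx
    exact hxy.trans (mul_le_mul_of_nonneg_left (le_csSup hT_bdd hy) hC)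
  · have hS_bdd : ¬ BddAbove S := by
      rintro ⟨M, hM⟩
      refine hT_bdd ⟨C * max M 0, fun y hy => ?_⟩
      obtain ⟨x, hx, hyx⟩ := hTS y hy
      exact hyx.trans (mul_le_mul_of_nonneg_left ((hM hx).trans (le_max_left _ _)) hC)
    rw [Real.sSup_of_not_bddAbove hS_bdd, Real.sSup_of_not_bddAbove hT_bdd, mul_zero]

lemma w_pos {ε t h : ℝ} (hε : 0 ≤ ε) (ht : 0 < t) (hh : 0 < h) : 0 < w ε t h := by
  have hm : 0 < min t h := lt_min ht hh
  have hlog : 0 ≤ log (t / min t h) := log_nonneg ((one_le_div hm).2 (min_le_left t h))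
  exact sqrt_pos.2 (mul_pos hm (by positivity))

lemma w_mul_le {ε a t h : ℝ} (hε : 0 ≤ ε) (ha : 0 < a) (ht : 0 < t) (hh : 0 < h) :
    w ε (a * t) (a * h) ≤ √a * (1 + √(ε * |log a|)) * w ε t h := by
  set m := min t h
  set L := log (t / m)
  have hL : 0 ≤ L := log_nonneg ((one_le_div (lt_min ht hh)).2 (min_le_left t h))
  have hlog : |log (a * t)| ≤ |log a| + |log t| := by
    rw [log_mul ha.ne' ht.ne']
    exact abs_add_le _ _
  have hfactor : 1 + L + ε * |log (a * t)| ≤ (1 + ε * |log a|) * (1 + L + ε * |log t|) := by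
    nlinarith [mul_le_mul_of_nonneg_left hlog hε, mul_nonneg hε (abs_nonneg (log a)),
      mul_nonneg hε (abs_nonneg (log t))]
  calc w ε (a * t) (a * h) = √(a * m * (1 + L + ε * |log (a * t)|)) := by
        rw [w, ← mul_min_of_nonneg _ _ ha.le, mul_div_mul_left _ _ ha.ne']
    _ ≤ √(a * (1 + ε * |log a|) * (m * (1 + L + ε * |log t|))) := by
        refine sqrt_le_sqrt ?_
        linarith [mul_le_mul_of_nonneg_left hfactor (mul_pos ha (lt_min ht hh)).le]
    _ = √a * √(1 + ε * |log a|) * w ε t h := by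
        rw [sqrt_mul (by positivity), sqrt_mul ha.le]
        rfl
    _ ≤ √a * (1 + √(ε * |log a|)) * w ε t h := by
        gcongr
        · exact sqrt_nonneg _
        · simpa only [sqrt_one] using Real.sqrt_add_le_sqrt_add_sqrt zero_le_one (by positivity : 0 ≤ ε * |log a|)

lemma abs_rpow_mul_sub_div_w_le {ε a s t : ℝ} (hε : 0 ≤ ε) (ha : 0 < a) (hs : 0 ≤ s)
    (hst : s < t) (x y : ℝ) :
    |a ^ (-(1:ℝ)/2) * x - a ^ (-(1:ℝ)/2) * y| / w ε t (t - s)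
      ≤ (1 + √(ε * |log a|)) * (|x - y| / w ε (a * t) (a * t - a * s)) := by
  have ht : 0 < t := hs.trans_lt hst
  have hC : 0 < 1 + √(ε * |log a|) := by positivity
  have hrpow : a ^ (-(1:ℝ)/2) = (√a)⁻¹ := by
    rw [sqrt_eq_rpow, ← rpow_neg ha.le]
    norm_num
  calc |a ^ (-(1:ℝ)/2) * x - a ^ (-(1:ℝ)/2) * y| / w ε t (t - s)
      = (1 + √(ε * |log a|)) * |x - y| / (√a * (1 + √(ε * |log a|)) * w ε t (t - s)) := by
        rw [hrpow, ← mul_sub, abs_mul, abs_inv, abs_of_nonneg (sqrt_nonneg a)]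
        field_simp
    _ ≤ (1 + √(ε * |log a|)) * |x - y| / w ε (a * t) (a * t - a * s) := by
        rw [← mul_sub]
        exact div_le_div_of_nonneg_left (by positivity)
          (w_pos hε (mul_pos ha ht) (mul_pos ha (sub_pos.2 hst)))
          (w_mul_le hε ha ht (sub_pos.2 hst))
    _ = _ := mul_div_assoc _ _ _

theorem MSup_rescale_le {Ω : Type*} {ε a : ℝ} (hε : 0 ≤ ε) (ha : 0 < a) {X Y : ℝ → Ω → ℝ}
    (hY : ∀ t ω, Y t ω = a ^ (-(1:ℝ)/2) * X (a * t) ω) (ω : Ω) :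
    MSup ε Y ω ≤ (1 + √(ε * |log a|)) * MSup ε X ω := by
  have hX : ∀ t ω, X t ω = a⁻¹ ^ (-(1:ℝ)/2) * Y (a⁻¹ * t) ω := by
    intro t ω
    rw [hY, inv_rpow ha.le, inv_mul_cancel_left₀ (rpow_pos_of_pos ha _).ne',
      mul_inv_cancel_left₀ ha.ne']
  apply Real.sSup_le_mul_sSup (by positivity)
  · rintro _ ⟨s, t, -, -, rfl⟩
    exact div_nonneg (abs_nonneg _) (sqrt_nonneg _)
  · rintro _ ⟨s, t, hs, hst, rfl⟩
    refine ⟨_, ⟨a * s, a * t, by positivity, by gcongr, rfl⟩, ?_⟩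
    rw [hY t, hY s]
    exact abs_rpow_mul_sub_div_w_le hε ha hs hst _ _
  · rintro _ ⟨s, t, hs, hst, rfl⟩
    refine ⟨_, ⟨a⁻¹ * s, a⁻¹ * t, by positivity, by gcongr, rfl⟩, ?_⟩
    rw [hX t, hX s]
    simpa only [log_inv, abs_neg] using abs_rpow_mul_sub_div_w_le hε (inv_pos.2 ha) hs hst _ _

theorem scaled_brownian_MSup_bound_general
    {Ω : Type*} [MeasurableSpace Ω] (P : Measure Ω)
    (B : ℝ → Ω → ℝ) (ε : ℝ) (hε₀ : 0 < ε)
    (a : ℝ) (ha : 0 < a) (Btilde : ℝ → Ω → ℝ)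
    (hBtilde : ∀ t ω, Btilde t ω = a ^ (-(1:ℝ)/2) * B (a * t) ω) :
    ∀ᵐ ω ∂P, MSup ε Btilde ω ≤ (1 + Real.sqrt (ε * |Real.log a|)) * MSup ε B ω :=
  Filter.Eventually.of_forall (MSup_rescale_le hε₀.le ha hBtilde)

/-- **Corollary (scaled Brownian motion).** Let `B` be a standard Brownian motion,
`0 < ε < 1` and `a > 0`, and let `B̃_t := a^{-1/2} B_{a t}` be the scaled Brownian motion.
Then, almost surely, `M_{B̃} ≤ (1 + √(ε |ln a|)) · M_B`. -/
theorem scaled_brownian_MSup_bound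
    {Ω : Type*} [MeasurableSpace Ω] (P : Measure Ω) [IsProbabilityMeasure P]
    (B : ℝ → Ω → ℝ) (hB : IsBrownianMotion P B) (ε : ℝ) (hε₀ : 0 < ε) (hε₁ : ε < 1)
    (a : ℝ) (ha : 0 < a) (Btilde : ℝ → Ω → ℝ)
    (hBtilde : ∀ t ω, Btilde t ω = a ^ (-(1:ℝ)/2) * B (a * t) ω) :
    ∀ᵐ ω ∂P, MSup ε Btilde ω ≤ (1 + Real.sqrt (ε * |Real.log a|)) * MSup ε B ω :=
  scaled_brownian_MSup_bound_general P B ε hε₀ a ha Btilde hBtilde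
end

section
/- Let c > 1, 0 < ε < 1, and q ∈ (1, c). Let B be a standard Brownian motion, Ψ(x) := e^{x²/2} − 1, μ(x) := √(c x), and for T > 0 let ξ_T := f_ε(T) ∫₀ᵀ ∫₀ᵀ Ψ(|B_t − B_s| / μ(|t − s|)) ds dt, where f_ε(T) := (1/T + 1)^{2(1−ε)} if T < 1, f_ε(1) := 1, and f_ε(T) := (T − 1)^{−2(1+ε)} if T > 1. Then, for every integer T ≥ 2, E[ξ_T^q] ≤ (T^{2q} / (T − 1)^{(2+ε)q}) · √(c/(c − q)) and E[ξ_{1/T}^q] ≤ ((T + 1)^{(2−ε)q} / T^{2q}) · √(c/(c − q)). -/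
open MeasureTheory ProbabilityTheory ENNReal
open scoped NNReal

/-- `Ψ(x) := e^{x²/2} − 1`. -/
noncomputable def Psi (x : ℝ) : ℝ := Real.exp (x ^ 2 / 2) - 1

/-- `μ(x) := √(c x)`. -/
noncomputable def mu (c x : ℝ) : ℝ := Real.sqrt (c * x)

/-- `f_ε(T) = (1/T + 1)^{2(1−ε)}` for `T < 1`, `f_ε(1) = 1`,
and `f_ε(T) = (T−1)^{−2(1+ε)}` for `T > 1`. -/
noncomputable def feps (ε T : ℝ) : ℝ :=
  if T < 1 then (1 / T + 1) ^ (2 * (1 - ε))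
  else if T = 1 then 1
  else (T - 1) ^ (-(2 * (1 + ε)))

/-- `ξ_T(ω) := f_ε(T) ∫₀ᵀ∫₀ᵀ Ψ(|B_t(ω) − B_s(ω)| / μ(|t−s|)) ds dt`,
as a lower integral with values in `[0, ∞]`. -/
noncomputable def xiT {Ω : Type*} (B : ℝ → Ω → ℝ) (c ε T : ℝ) (ω : Ω) : ℝ≥0∞ :=
  ENNReal.ofReal (feps ε T) *
    ∫⁻ t in Set.Icc (0:ℝ) T, ∫⁻ s in Set.Icc (0:ℝ) T,
      ENNReal.ofReal (Psi (|B t ω - B s ω| / mu c |t - s|))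

/-!
Hölder's inequality against the constant `1` on the square `[0, T]²` gives
`ξ_T^q ≤ f_ε(T)^q T^{2(q-1)} ∫∫ Ψ(|B_t − B_s| / μ(|t − s|))^q ds dt`, and Tonelli moves the
expectation inside the double integral. Since `B_t − B_s ~ N(0, |t − s|)`, each integrand has
expectation at most `E[exp(q Z² / (2c))] = √(c / (c − q))` for a standard normal `Z`. Hence
`E[ξ_T^q] ≤ (f_ε(T) T²)^q √(c / (c − q))`, and the two bounds follow by comparing exponents,
as `T − 1 ≥ 1` and `T + 1 ≥ 1`.
-/

theorem lintegral_rpow_le_measure_univ_rpow_mul {α : Type*} [MeasurableSpace α]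
    (μ : Measure α) {f : α → ℝ≥0∞} (hf : AEMeasurable f μ) {q : ℝ} (hq : 1 < q) :
    (∫⁻ a, f a ∂μ) ^ q ≤ μ Set.univ ^ (q - 1) * ∫⁻ a, f a ^ q ∂μ := by
  have hq0 : 0 < q := zero_lt_one.trans hq
  have hHolder := ENNReal.lintegral_mul_le_Lp_mul_Lq μ (Real.HolderConjugate.conjExponent hq)
    hf (aemeasurable_const (b := (1 : ℝ≥0∞)))
  simp only [Pi.mul_apply, mul_one, ENNReal.one_rpow, lintegral_const, one_mul] at hHolder
  calc (∫⁻ a, f a ∂μ) ^ q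
      ≤ ((∫⁻ a, f a ^ q ∂μ) ^ (1 / q) * μ Set.univ ^ (1 / q.conjExponent)) ^ q := by
        gcongr
    _ = μ Set.univ ^ (q - 1) * ∫⁻ a, f a ^ q ∂μ := by
        rw [ENNReal.mul_rpow_of_nonneg _ _ hq0.le, ← ENNReal.rpow_mul, ← ENNReal.rpow_mul,
          one_div_mul_cancel hq0.ne', ENNReal.rpow_one, mul_comm, Real.conjExponent]
        congr 2
        field_simp

theorem lintegral_rpow_lintegral_le {α β : Type*} [MeasurableSpace α] [MeasurableSpace β]
    {P : Measure α} [SFinite P] {ν : Measure β} [IsFiniteMeasure ν] {F : α → β → ℝ≥0∞}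
    (hF : Measurable (Function.uncurry F)) {q : ℝ} (hq : 1 < q) {K : ℝ≥0∞}
    (hK : ∀ᵐ y ∂ν, ∫⁻ x, F x y ^ q ∂P ≤ K) :
    ∫⁻ x, (∫⁻ y, F x y ∂ν) ^ q ∂P ≤ ν Set.univ ^ q * K := by
  have hFq : Measurable (Function.uncurry fun x y => F x y ^ q) := hF.pow_const q
  calc ∫⁻ x, (∫⁻ y, F x y ∂ν) ^ q ∂P
      ≤ ∫⁻ x, ν Set.univ ^ (q - 1) * ∫⁻ y, F x y ^ q ∂ν ∂P :=
        lintegral_mono fun x => lintegral_rpow_le_measure_univ_rpow_mul ν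
          (hF.comp measurable_prodMk_left).aemeasurable hq
    _ = ν Set.univ ^ (q - 1) * ∫⁻ y, ∫⁻ x, F x y ^ q ∂P ∂ν := by
        rw [lintegral_const_mul _ (hFq.lintegral_prod_right (ν := ν)),
          lintegral_lintegral_swap hFq.aemeasurable]
    _ ≤ ν Set.univ ^ (q - 1) * (K * ν Set.univ) := by
        gcongr
        exact (lintegral_mono_ae hK).trans_eq (lintegral_const K)
    _ = ν Set.univ ^ q * K := by
        rw [mul_comm K, ← mul_assoc]
        congr 1
        conv_rhs => rw [← sub_add_cancel q 1,
          ENNReal.rpow_add_of_nonneg _ _ (by linarith) zero_le_one, ENNReal.rpow_one]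

theorem lintegral_ofReal_exp_mul_sq_gaussianReal {v : ℝ≥0} (hv : 0 < v) {θ : ℝ}
    (hθ : 2 * θ * v < 1) :
    ∫⁻ x, ENNReal.ofReal (Real.exp (θ * x ^ 2)) ∂gaussianReal 0 v
      = ENNReal.ofReal (Real.sqrt (1 / (1 - 2 * θ * v))) := by
  have hv' : (0 : ℝ) < v := hv
  set b : ℝ := 1 / (2 * v) - θ with hb
  have hb_pos : 0 < b := by
    rw [hb, sub_pos, lt_div_iff₀ (by positivity)]
    linarith
  have hdensity : ∀ x : ℝ, gaussianPDF 0 v x * ENNReal.ofReal (Real.exp (θ * x ^ 2))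
      = ENNReal.ofReal ((Real.sqrt (2 * Real.pi * v))⁻¹ * Real.exp (-b * x ^ 2)) := by
    intro x
    rw [gaussianPDF, ← ENNReal.ofReal_mul (gaussianPDFReal_nonneg _ _ _), gaussianPDFReal,
      mul_assoc, ← Real.exp_add, hb]
    ring_nf
  rw [gaussianReal_of_var_ne_zero _ hv.ne', lintegral_withDensity_eq_lintegral_mul _
    (measurable_gaussianPDF _ _) (by fun_prop)]
  simp_rw [Pi.mul_apply, hdensity]
  rw [← ofReal_integral_eq_lintegral_ofReal
    ((integrable_exp_neg_mul_sq hb_pos).const_mul _) (ae_of_all _ fun x => by positivity),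
    integral_const_mul, integral_gaussian, ← Real.sqrt_inv, ← Real.sqrt_mul (by positivity)]
  have h : 1 - 2 * θ * v = 2 * v * b := by
    rw [hb]
    field_simp
  rw [h]
  congr 2
  field_simp

theorem ofReal_Psi_abs_div_mu_rpow_le {c r q : ℝ} (hc : 0 < c) (hr : 0 < r) (hq : 0 ≤ q)
    (x : ℝ) :
    ENNReal.ofReal (Psi (|x| / mu c r)) ^ q
      ≤ ENNReal.ofReal (Real.exp (q / (2 * c * r) * x ^ 2)) := by
  have hPsi : Psi (|x| / mu c r) ≤ Real.exp (x ^ 2 / (2 * c * r)) := by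
    have hsq : (|x| / mu c r) ^ 2 / 2 = x ^ 2 / (2 * c * r) := by
      rw [mu, div_pow, sq_abs, Real.sq_sqrt (by positivity), div_div]
      ring
    rw [Psi, hsq]
    linarith
  calc ENNReal.ofReal (Psi (|x| / mu c r)) ^ q
      ≤ ENNReal.ofReal (Real.exp (x ^ 2 / (2 * c * r))) ^ q := by gcongr
    _ = ENNReal.ofReal (Real.exp (q / (2 * c * r) * x ^ 2)) := by
        rw [ENNReal.ofReal_rpow_of_nonneg (Real.exp_nonneg _) hq, ← Real.exp_mul]
        ring_nf

theorem lintegral_ofReal_Psi_increment_rpow_le {Ω : Type*} [MeasurableSpace Ω]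
    {P : Measure Ω} {B : ℝ → Ω → ℝ} (hB : IsBrownianMotion P B) {c q : ℝ} (hq : 0 < q)
    (hqc : q < c) {s t : ℝ} (hs : 0 ≤ s) (ht : 0 ≤ t) :
    ∫⁻ ω, ENNReal.ofReal (Psi (|B t ω - B s ω| / mu c |t - s|)) ^ q ∂P
      ≤ ENNReal.ofReal (Real.sqrt (c / (c - q))) := by
  wlog hst : s ≤ t generalizing s t
  · simpa only [abs_sub_comm] using this ht hs (le_of_not_ge hst)
  obtain rfl | hst := hst.eq_or_lt
  · simp [Psi, ENNReal.zero_rpow_of_pos hq]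
  have hc : 0 < c := hq.trans hqc
  have hv : 0 < t - s := sub_pos.mpr hst
  have hvar : ((t - s).toNNReal : ℝ) = t - s := Real.coe_toNNReal _ hv.le
  have hexp : 2 * (q / (2 * c * (t - s))) * (t - s) = q / c := by
    field_simp
  calc ∫⁻ ω, ENNReal.ofReal (Psi (|B t ω - B s ω| / mu c |t - s|)) ^ q ∂P
      = ∫⁻ x, ENNReal.ofReal (Psi (|x| / mu c (t - s))) ^ q
          ∂gaussianReal 0 (t - s).toNNReal := by
        rw [← hB.2.2.2.1 s t hs hst.le, lintegral_map (by unfold Psi; fun_prop)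
          (g := fun ω => B t ω - B s ω) ((hB.1 t).sub (hB.1 s)), abs_of_pos hv]
    _ ≤ ∫⁻ x, ENNReal.ofReal (Real.exp (q / (2 * c * (t - s)) * x ^ 2))
          ∂gaussianReal 0 (t - s).toNNReal :=
        lintegral_mono (ofReal_Psi_abs_div_mu_rpow_le hc hv hq.le)
    _ = ENNReal.ofReal (Real.sqrt (c / (c - q))) := by
        rw [lintegral_ofReal_exp_mul_sq_gaussianReal (Real.toNNReal_pos.mpr hv)
          (by rw [hvar, hexp, div_lt_one hc]; exact hqc), hvar, hexp,
          one_sub_div hc.ne', one_div_div]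

theorem measurable_ofReal_Psi_increment {Ω : Type*} [MeasurableSpace Ω] {B : ℝ → Ω → ℝ}
    (hmeas : ∀ t, Measurable (B t)) (hcont : ∀ ω, Continuous fun t => B t ω) (c : ℝ) :
    Measurable fun z : Ω × ℝ × ℝ =>
      ENNReal.ofReal (Psi (|B z.2.1 z.1 - B z.2.2 z.1| / mu c |z.2.1 - z.2.2|)) := by
  have hB : Measurable (Function.uncurry B) :=
    measurable_uncurry_of_continuous_of_measurable hcont hmeas
  have h1 : Measurable fun z : Ω × ℝ × ℝ => B z.2.1 z.1 :=
    hB.comp (measurable_snd.fst.prodMk measurable_fst)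
  have h2 : Measurable fun z : Ω × ℝ × ℝ => B z.2.2 z.1 :=
    hB.comp (measurable_snd.snd.prodMk measurable_fst)
  unfold Psi mu
  fun_prop

theorem lintegral_xiT_rpow_le {Ω : Type*} [MeasurableSpace Ω] {P : Measure Ω} [SFinite P]
    {B : ℝ → Ω → ℝ} (hB : IsBrownianMotion P B) {c ε q : ℝ} (hq : 1 < q) (hqc : q < c)
    {T : ℝ} (hT : 0 ≤ T) :
    ∫⁻ ω, xiT B c ε T ω ^ q ∂P
      ≤ ENNReal.ofReal (feps ε T * T ^ 2) ^ q * ENNReal.ofReal (Real.sqrt (c / (c - q))) := by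
  have hq0 : 0 < q := zero_lt_one.trans hq
  set ν := volume.restrict (Set.Icc (0 : ℝ) T)
  set F : Ω → ℝ × ℝ → ℝ≥0∞ :=
    fun ω p => ENNReal.ofReal (Psi (|B p.1 ω - B p.2 ω| / mu c |p.1 - p.2|))
  have hF : Measurable (Function.uncurry F) := measurable_ofReal_Psi_increment hB.1 hB.2.2.1 c
  have hxi : ∀ ω, xiT B c ε T ω = ENNReal.ofReal (feps ε T) * ∫⁻ p, F ω p ∂ν.prod ν :=
    fun ω => congrArg _ (lintegral_lintegral (f := fun t s => F ω (t, s))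
      (hF.comp measurable_prodMk_left).aemeasurable)
  have hmass : ν.prod ν Set.univ = ENNReal.ofReal (T ^ 2) := by
    rw [← Set.univ_prod_univ, Measure.prod_prod, Measure.restrict_apply_univ, Real.volume_Icc,
      sub_zero, ← ENNReal.ofReal_mul hT, sq]
  have hpair : ∀ᵐ p ∂ν.prod ν, ∫⁻ ω, F ω p ^ q ∂P ≤ ENNReal.ofReal (Real.sqrt (c / (c - q))) := by
    rw [Measure.prod_restrict]
    filter_upwards [ae_restrict_mem (measurableSet_Icc.prod measurableSet_Icc)] with p hp
    exact lintegral_ofReal_Psi_increment_rpow_le hB hq0 hqc hp.2.1 hp.1.1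
  calc ∫⁻ ω, xiT B c ε T ω ^ q ∂P
      = ENNReal.ofReal (feps ε T) ^ q * ∫⁻ ω, (∫⁻ p, F ω p ∂ν.prod ν) ^ q ∂P := by
        simp_rw [hxi, ENNReal.mul_rpow_of_nonneg _ _ hq0.le]
        exact lintegral_const_mul' _ _ (ENNReal.rpow_ne_top_of_nonneg hq0.le ofReal_ne_top)
    _ ≤ ENNReal.ofReal (feps ε T) ^ q *
          (ν.prod ν Set.univ ^ q * ENNReal.ofReal (Real.sqrt (c / (c - q)))) := by
        gcongr
        exact lintegral_rpow_lintegral_le hF hq hpair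
    _ = ENNReal.ofReal (feps ε T * T ^ 2) ^ q * ENNReal.ofReal (Real.sqrt (c / (c - q))) := by
        rw [hmass, ← mul_assoc, ← ENNReal.mul_rpow_of_nonneg _ _ hq0.le,
          ← ENNReal.ofReal_mul' (sq_nonneg T)]

theorem feps_of_lt_one {ε T : ℝ} (hT : T < 1) : feps ε T = (1 / T + 1) ^ (2 * (1 - ε)) :=
  if_pos hT

theorem feps_of_one_lt {ε T : ℝ} (hT : 1 < T) : feps ε T = (T - 1) ^ (-(2 * (1 + ε))) := by
  rw [feps, if_neg hT.not_gt, if_neg hT.ne']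

theorem feps_nonneg {ε T : ℝ} (hT : 0 < T) : 0 ≤ feps ε T := by
  unfold feps
  split_ifs with h1 h2
  · positivity
  · exact zero_le_one
  · exact Real.rpow_nonneg (by linarith [lt_of_le_of_ne (not_lt.mp h1) (Ne.symm h2)]) _

theorem ofReal_feps_mul_sq_rpow_le {ε q T : ℝ} (hε : 0 ≤ ε) (hq : 0 ≤ q) (hT : 2 ≤ T) :
    ENNReal.ofReal (feps ε T * T ^ 2) ^ q
      ≤ ENNReal.ofReal (T ^ (2 * q) / (T - 1) ^ ((2 + ε) * q)) := by
  have hT1 : 0 < T - 1 := by linarith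
  have hf : 0 ≤ feps ε T * T ^ 2 := mul_nonneg (feps_nonneg (by linarith)) (sq_nonneg T)
  have hle : feps ε T * T ^ 2 ≤ T ^ 2 / (T - 1) ^ (2 + ε) := by
    rw [feps_of_one_lt (by linarith), div_eq_mul_inv, ← Real.rpow_neg hT1.le, mul_comm]
    gcongr <;> linarith
  rw [ENNReal.ofReal_rpow_of_nonneg hf hq]
  refine ENNReal.ofReal_le_ofReal ((Real.rpow_le_rpow hf hle hq).trans_eq ?_)
  rw [Real.div_rpow (sq_nonneg T) (Real.rpow_nonneg hT1.le _), ← Real.rpow_natCast,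
    ← Real.rpow_mul (by linarith), ← Real.rpow_mul hT1.le]
  norm_num

theorem ofReal_feps_inv_mul_inv_sq_rpow_le {ε q T : ℝ} (hε : 0 ≤ ε) (hq : 0 ≤ q) (hT : 1 < T) :
    ENNReal.ofReal (feps ε (1 / T) * (1 / T) ^ 2) ^ q
      ≤ ENNReal.ofReal ((T + 1) ^ ((2 - ε) * q) / T ^ (2 * q)) := by
  have hT0 : 0 < T := by linarith
  have hf : 0 ≤ feps ε (1 / T) * (1 / T) ^ 2 :=
    mul_nonneg (feps_nonneg (by positivity)) (sq_nonneg _)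
  have hle : feps ε (1 / T) * (1 / T) ^ 2 ≤ (T + 1) ^ (2 - ε) / T ^ 2 := by
    rw [feps_of_lt_one ((div_lt_one hT0).mpr hT), one_div_one_div, div_pow, one_pow,
      ← div_eq_mul_one_div]
    gcongr <;> linarith
  rw [ENNReal.ofReal_rpow_of_nonneg hf hq]
  refine ENNReal.ofReal_le_ofReal ((Real.rpow_le_rpow hf hle hq).trans_eq ?_)
  rw [Real.div_rpow (by positivity) (sq_nonneg T), ← Real.rpow_natCast,
    ← Real.rpow_mul hT0.le, ← Real.rpow_mul (by linarith)]
  norm_num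

theorem xiT_moment_bounds_general
    {Ω : Type*} [MeasurableSpace Ω] (P : Measure Ω) [IsProbabilityMeasure P]
    (B : ℝ → Ω → ℝ) (hB : IsBrownianMotion P B)
    (c ε : ℝ) (hε₀ : 0 < ε)
    (q : ℝ) (hq₁ : 1 < q) (hqc : q < c)
    (T : ℕ) (hT : 2 ≤ T) :
    (∫⁻ ω, (xiT B c ε (T : ℝ) ω) ^ q ∂P ≤
      ENNReal.ofReal ((T : ℝ) ^ (2 * q) / ((T : ℝ) - 1) ^ ((2 + ε) * q) *
        Real.sqrt (c / (c - q)))) ∧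
    (∫⁻ ω, (xiT B c ε (1 / (T : ℝ)) ω) ^ q ∂P ≤
      ENNReal.ofReal (((T : ℝ) + 1) ^ ((2 - ε) * q) / (T : ℝ) ^ (2 * q) *
        Real.sqrt (c / (c - q)))) := by
  have hT2 : (2 : ℝ) ≤ T := by exact_mod_cast hT
  have hq0 : 0 ≤ q := by linarith
  have hK : 0 ≤ Real.sqrt (c / (c - q)) := Real.sqrt_nonneg _
  constructor
  · calc _ ≤ ENNReal.ofReal (feps ε T * T ^ 2) ^ q * ENNReal.ofReal (Real.sqrt (c / (c - q))) :=
          lintegral_xiT_rpow_le hB hq₁ hqc (by linarith)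
      _ ≤ ENNReal.ofReal ((T : ℝ) ^ (2 * q) / ((T : ℝ) - 1) ^ ((2 + ε) * q)) *
            ENNReal.ofReal (Real.sqrt (c / (c - q))) := by
          gcongr
          exact ofReal_feps_mul_sq_rpow_le hε₀.le hq0 hT2
      _ = _ := (ENNReal.ofReal_mul' hK).symm
  · calc _ ≤ ENNReal.ofReal (feps ε (1 / T) * (1 / T) ^ 2) ^ q *
            ENNReal.ofReal (Real.sqrt (c / (c - q))) :=
          lintegral_xiT_rpow_le hB hq₁ hqc (by positivity)
      _ ≤ ENNReal.ofReal (((T : ℝ) + 1) ^ ((2 - ε) * q) / (T : ℝ) ^ (2 * q)) *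
            ENNReal.ofReal (Real.sqrt (c / (c - q))) := by
          gcongr
          exact ofReal_feps_inv_mul_inv_sq_rpow_le hε₀.le hq0 (by linarith)
      _ = _ := (ENNReal.ofReal_mul' hK).symm

/-- **Moment bounds for `ξ_T` and `ξ_{1/T}`.** Let `c > 1`, `0 < ε < 1` and
`q ∈ (1, c)`. Then for every integer `T ≥ 2`,
`E[ξ_T^q] ≤ (T^{2q}/(T−1)^{(2+ε)q}) √(c/(c−q))` and
`E[ξ_{1/T}^q] ≤ ((T+1)^{(2−ε)q}/T^{2q}) √(c/(c−q))`. -/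
theorem xiT_moment_bounds
    {Ω : Type*} [MeasurableSpace Ω] (P : Measure Ω) [IsProbabilityMeasure P]
    (B : ℝ → Ω → ℝ) (hB : IsBrownianMotion P B)
    (c ε : ℝ) (hc : 1 < c) (hε₀ : 0 < ε) (hε₁ : ε < 1)
    (q : ℝ) (hq₁ : 1 < q) (hqc : q < c)
    (T : ℕ) (hT : 2 ≤ T) :
    (∫⁻ ω, (xiT B c ε (T : ℝ) ω) ^ q ∂P ≤
      ENNReal.ofReal ((T : ℝ) ^ (2 * q) / ((T : ℝ) - 1) ^ ((2 + ε) * q) *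
        Real.sqrt (c / (c - q)))) ∧
    (∫⁻ ω, (xiT B c ε (1 / (T : ℝ)) ω) ^ q ∂P ≤
      ENNReal.ofReal (((T : ℝ) + 1) ^ ((2 - ε) * q) / (T : ℝ) ^ (2 * q) *
        Real.sqrt (c / (c - q)))) :=
  xiT_moment_bounds_general P B hB c ε hε₀ q hq₁ hqc T hT
end
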